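/- arXiv:1401.3034 — 7 statements merged into one kernel-verified Lean document; each statement's English description precedes it below -/
import Mathlib

section
/- Let m ≥ 2, let a₁ < a₂ < … < a_m be real numbers, let k be an integer with 1 ≤ k ≤ m − 1, let θ̂ ∈ ℝ, and let C > 0. Define L(θ) = C·[ ∑_{i=1}^{k} ((aᵢ ∧ θ̂ − θ)² − (aᵢ ∧ θ − θ)²) + ∑_{i=k+1}^{m} ((aᵢ ∨ θ̂ − θ)² − (aᵢ ∨ θ − θ)²) ] for θ ∈ ℝ, where x ∧ y = min(x,y) and x ∨ y = max(x,y). Then: (i) L is continuous on ℝ; (ii) L(θ̂) = 0; (iii) L is monotone nonincreasing on (−∞, θ̂] and monotone nondecreasing on [θ̂, ∞); (iv) L(θ) → ∞ as θ → +∞ and as θ → −∞. -/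
open Filter

private lemma gmin_mono (a t : ℝ) {x y : ℝ} (hx : t ≤ x) (hxy : x ≤ y) :
    (min a t - x) ^ 2 - (min a x - x) ^ 2 ≤ (min a t - y) ^ 2 - (min a y - y) ^ 2 := by
  simp only [min_def]
  split_ifs <;> nlinarith

private lemma gmin_anti (a t : ℝ) {x y : ℝ} (hy : y ≤ t) (hxy : x ≤ y) :
    (min a t - y) ^ 2 - (min a y - y) ^ 2 ≤ (min a t - x) ^ 2 - (min a x - x) ^ 2 := by
  simp only [min_def]
  split_ifs <;> nlinarith

private lemma gmax_mono (a t : ℝ) {x y : ℝ} (hx : t ≤ x) (hxy : x ≤ y) :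
    (max a t - x) ^ 2 - (max a x - x) ^ 2 ≤ (max a t - y) ^ 2 - (max a y - y) ^ 2 := by
  simp only [max_def]
  split_ifs <;> nlinarith

private lemma gmax_anti (a t : ℝ) {x y : ℝ} (hy : y ≤ t) (hxy : x ≤ y) :
    (max a t - y) ^ 2 - (max a y - y) ^ 2 ≤ (max a t - x) ^ 2 - (max a x - x) ^ 2 := by
  simp only [max_def]
  split_ifs <;> nlinarith

private lemma gmin_nonneg_right (a t θ : ℝ) (h : t ≤ θ) :
    0 ≤ (min a t - θ) ^ 2 - (min a θ - θ) ^ 2 := by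
  have h2 := gmin_mono a t (le_refl t) h
  simpa using h2

private lemma gmin_nonneg_left (a t θ : ℝ) (h : θ ≤ t) :
    0 ≤ (min a t - θ) ^ 2 - (min a θ - θ) ^ 2 := by
  have h2 := gmin_anti a t (le_refl t) h
  simpa using h2

private lemma gmax_nonneg_right (a t θ : ℝ) (h : t ≤ θ) :
    0 ≤ (max a t - θ) ^ 2 - (max a θ - θ) ^ 2 := by
  have h2 := gmax_mono a t (le_refl t) h
  simpa using h2

private lemma gmax_nonneg_left (a t θ : ℝ) (h : θ ≤ t) :
    0 ≤ (max a t - θ) ^ 2 - (max a θ - θ) ^ 2 := by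
  have h2 := gmax_anti a t (le_refl t) h
  simpa using h2

/-- Shape of the likelihood-ratio-type statistic `L(θ)`:
with distinct values `a 0 < a 1 < … < a (m-1)` (0-indexed version of `a₁ < … < a_m`),
`1 ≤ k ≤ m - 1`, `θ̂ ∈ ℝ` and `C > 0`,
`L(θ) = C·[ ∑_{i<k} ((aᵢ ∧ θ̂ − θ)² − (aᵢ ∧ θ − θ)²)
          + ∑_{k ≤ i < m} ((aᵢ ∨ θ̂ − θ)² − (aᵢ ∨ θ − θ)²) ]`
is continuous, vanishes at `θ̂`, is nonincreasing on `(−∞, θ̂]`, nondecreasing on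
`[θ̂, ∞)`, and tends to `∞` as `θ → ±∞`. -/
theorem stmt_2 (m k : ℕ) (hm : 2 ≤ m) (hk1 : 1 ≤ k) (hk2 : k ≤ m - 1)
    (a : ℕ → ℝ) (ha : ∀ i j, i < j → j < m → a i < a j)
    (θhat C : ℝ) (hC : 0 < C) (L : ℝ → ℝ)
    (hL : ∀ θ : ℝ, L θ =
      C * ((∑ i ∈ Finset.range k,
              ((min (a i) θhat - θ) ^ 2 - (min (a i) θ - θ) ^ 2)) +
           (∑ i ∈ Finset.Ico k m,
              ((max (a i) θhat - θ) ^ 2 - (max (a i) θ - θ) ^ 2)))) :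
    Continuous L ∧ L θhat = 0 ∧
      AntitoneOn L (Set.Iic θhat) ∧ MonotoneOn L (Set.Ici θhat) ∧
      Tendsto L atTop atTop ∧ Tendsto L atBot atTop := by
  have hkm : k < m := by omega
  have hLe : L = fun θ => C * ((∑ i ∈ Finset.range k,
              ((min (a i) θhat - θ) ^ 2 - (min (a i) θ - θ) ^ 2)) +
           (∑ i ∈ Finset.Ico k m,
              ((max (a i) θhat - θ) ^ 2 - (max (a i) θ - θ) ^ 2))) := funext hL
  subst hLe
  refine ⟨?_, ?_, ?_, ?_, ?_, ?_⟩
  · -- continuity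
    refine continuous_const.mul (Continuous.add ?_ ?_)
    · exact continuous_finset_sum _ fun i _ => by fun_prop
    · exact continuous_finset_sum _ fun i _ => by fun_prop
  · simp
  · -- antitone on Iic
    intro x hx y hy hxy
    simp only [Set.mem_Iic] at hx hy
    dsimp only
    refine mul_le_mul_of_nonneg_left (add_le_add ?_ ?_) hC.le
    · exact Finset.sum_le_sum fun i _ => gmin_anti _ _ hy hxy
    · exact Finset.sum_le_sum fun i _ => gmax_anti _ _ hy hxy
  · -- monotone on Ici
    intro x hx y hy hxy
    simp only [Set.mem_Ici] at hx hy
    dsimp only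
    refine mul_le_mul_of_nonneg_left (add_le_add ?_ ?_) hC.le
    · exact Finset.sum_le_sum fun i _ => gmin_mono _ _ hx hxy
    · exact Finset.sum_le_sum fun i _ => gmax_mono _ _ hx hxy
  · -- tendsto atTop
    have h1 : Tendsto (fun θ : ℝ => C * (max (a k) θhat - θ) ^ 2) atTop atTop := by
      have h2 : Tendsto (fun θ : ℝ => (θ - max (a k) θhat) ^ 2) atTop atTop :=
        (tendsto_pow_atTop two_ne_zero).comp (tendsto_atTop_add_const_right _ _ tendsto_id)
      exact (h2.congr (fun θ => by ring)).const_mul_atTop hC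
    refine tendsto_atTop_mono' atTop ?_ h1
    filter_upwards [eventually_ge_atTop (max θhat (a k))] with θ hθ
    have hθ1 : θhat ≤ θ := le_trans (le_max_left _ _) hθ
    have hθ2 : a k ≤ θ := le_trans (le_max_right _ _) hθ
    refine mul_le_mul_of_nonneg_left ?_ hC.le
    have hS1 : (0:ℝ) ≤ ∑ i ∈ Finset.range k,
        ((min (a i) θhat - θ) ^ 2 - (min (a i) θ - θ) ^ 2) :=
      Finset.sum_nonneg fun i _ => gmin_nonneg_right _ _ _ hθ1
    have hS2 : (max (a k) θhat - θ) ^ 2 - (max (a k) θ - θ) ^ 2 ≤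
        ∑ i ∈ Finset.Ico k m, ((max (a i) θhat - θ) ^ 2 - (max (a i) θ - θ) ^ 2) :=
      Finset.single_le_sum (fun i _ => gmax_nonneg_right _ _ _ hθ1)
        (Finset.mem_Ico.mpr ⟨le_refl k, hkm⟩)
    have hmax : max (a k) θ = θ := max_eq_right hθ2
    rw [hmax] at hS2
    simp only [sub_self] at hS2
    nlinarith
  · -- tendsto atBot
    have h1 : Tendsto (fun θ : ℝ => C * (min (a 0) θhat - θ) ^ 2) atBot atTop := by
      have h2 : Tendsto (fun θ : ℝ => min (a 0) θhat - θ) atBot atTop := by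
        simp only [sub_eq_add_neg]
        exact tendsto_atTop_add_const_left atBot _ tendsto_neg_atBot_atTop
      exact ((tendsto_pow_atTop two_ne_zero).comp h2).const_mul_atTop hC
    refine tendsto_atTop_mono' atBot ?_ h1
    filter_upwards [eventually_le_atBot (min θhat (a 0))] with θ hθ
    have hθ1 : θ ≤ θhat := le_trans hθ (min_le_left _ _)
    have hθ2 : θ ≤ a 0 := le_trans hθ (min_le_right _ _)
    refine mul_le_mul_of_nonneg_left ?_ hC.le
    have hS2 : (0:ℝ) ≤ ∑ i ∈ Finset.Ico k m,
        ((max (a i) θhat - θ) ^ 2 - (max (a i) θ - θ) ^ 2) :=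
      Finset.sum_nonneg fun i _ => gmax_nonneg_left _ _ _ hθ1
    have hS1 : (min (a 0) θhat - θ) ^ 2 - (min (a 0) θ - θ) ^ 2 ≤
        ∑ i ∈ Finset.range k, ((min (a i) θhat - θ) ^ 2 - (min (a i) θ - θ) ^ 2) :=
      Finset.single_le_sum (fun i _ => gmin_nonneg_left _ _ _ hθ1)
        (Finset.mem_range.mpr (by omega))
    have hmin : min (a 0) θ = θ := min_eq_right hθ2
    rw [hmin] at hS1
    simp only [sub_self] at hS1
    nlinarith
end

section
/- Let m ≥ 2, let a₁ < a₂ < … < a_m be real numbers, let k be an integer with 1 ≤ k ≤ m − 1, let C > 0, and let θ̂ ∈ ℝ satisfy a_k ≤ θ̂ ≤ a_{k+1} (so that aᵢ ∧ θ̂ = aᵢ for i ≤ k and aᵢ ∨ θ̂ = aᵢ for i ≥ k+1). Define L(θ) = C·[ ∑_{i=1}^{k} ((aᵢ ∧ θ̂ − θ)² − (aᵢ ∧ θ − θ)²) + ∑_{i=k+1}^{m} ((aᵢ ∨ θ̂ − θ)² − (aᵢ ∨ θ − θ)²) ] and T(θ) = C·[ ∑_{i=1}^{k} (aᵢ ∧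 θ̂ − aᵢ ∧ θ)² + ∑_{i=k+1}^{m} (aᵢ ∨ θ̂ − aᵢ ∨ θ)² ]. Then L(θ) = T(θ) for every θ ∈ ℝ. -/
lemma min_aux (x θ : ℝ) : (x - θ) ^ 2 - (min x θ - θ) ^ 2 = (x - min x θ) ^ 2 := by
  rcases le_total x θ with h | h
  · rw [min_eq_left h]; ring
  · rw [min_eq_right h]; ring

lemma max_aux (x θ : ℝ) : (x - θ) ^ 2 - (max x θ - θ) ^ 2 = (x - max x θ) ^ 2 := by
  rcases le_total x θ with h | h
  · rw [max_eq_right h]; ring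
  · rw [max_eq_left h]; ring

/-- At jump points of the isotonic regression estimator (`a_k ≤ θ̂ ≤ a_{k+1}`,
i.e. `a (k-1) ≤ θ̂ ≤ a k` in 0-indexed form), the likelihood-ratio-type statistic
`L(θ)` equals the distance-type statistic `T(θ)` for all `θ`. -/
theorem stmt_4 (m k : ℕ) (hm : 2 ≤ m) (hk1 : 1 ≤ k) (hk2 : k ≤ m - 1)
    (a : ℕ → ℝ) (ha : ∀ i j, i < j → j < m → a i < a j)
    (θhat C : ℝ) (hC : 0 < C)
    (hθ1 : a (k - 1) ≤ θhat) (hθ2 : θhat ≤ a k)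
    (L T : ℝ → ℝ)
    (hL : ∀ θ : ℝ, L θ =
      C * ((∑ i ∈ Finset.range k,
              ((min (a i) θhat - θ) ^ 2 - (min (a i) θ - θ) ^ 2)) +
           (∑ i ∈ Finset.Ico k m,
              ((max (a i) θhat - θ) ^ 2 - (max (a i) θ - θ) ^ 2))))
    (hT : ∀ θ : ℝ, T θ =
      C * ((∑ i ∈ Finset.range k, (min (a i) θhat - min (a i) θ) ^ 2) +
           (∑ i ∈ Finset.Ico k m, (max (a i) θhat - max (a i) θ) ^ 2))) :
    ∀ θ : ℝ, L θ = T θ := by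
  intro θ
  have hkm : k - 1 < m := lt_of_le_of_lt (Nat.sub_le k 1) (lt_of_le_of_lt hk2 (Nat.sub_lt (by omega) one_pos))
  rw [hL, hT]
  congr 1
  congr 1
  · apply Finset.sum_congr rfl
    intro i hi
    have hi' : i < k := Finset.mem_range.mp hi
    have h1 : a i ≤ θhat := by
      rcases eq_or_lt_of_le (Nat.le_sub_one_of_lt hi') with h | h
      · rw [h]; exact hθ1
      · exact le_of_lt (lt_of_lt_of_le (ha i (k-1) h hkm) hθ1)
    rw [min_eq_left h1]
    exact min_aux (a i) θ
  · apply Finset.sum_congr rfl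
    intro i hi
    obtain ⟨h1, h2⟩ := Finset.mem_Ico.mp hi
    have h3 : θhat ≤ a i := by
      rcases eq_or_lt_of_le h1 with h | h
      · rw [← h]; exact hθ2
      · exact le_of_lt (lt_of_le_of_lt hθ2 (ha k i h h2))
    rw [max_eq_left h3]
    exact max_aux (a i) θ
end

section
/- Let (Ω, 𝓕, P) be a probability space, let a < b be reals, and let m_n : ℕ → Ω → ([a,b] → ℝ) be a sequence of random functions such that for every n and every ω ∈ Ω the function t ↦ m_n(t)(ω) is monotone nondecreasing on [a,b], and for every t ∈ [a,b] the map ω ↦ m_n(t)(ω) is measurable. Let m : [a,b] → ℝ be a (nonrandom) continuous monotone nondecreasing function. If for every t ∈ [a,b] the real random variables m_n(t) converge to the constant m(t) in probability (i.e., for all ε > 0, P(|m_n(t) − m(t)| > ε) → 0 as n → ∞), then sup_{t ∈ [a,b]} |m_n(t) − m(t)| converges to 0 in probability: for every ε > 0, P(sup_{t ∈ [a,b]} |m_n(t) − m(t)| > ε) → 0 as n → ∞. -/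
open Filter MeasureTheory Set

/-!
Uniform continuity of `m` on `[a, b]` gives, for every `η > 0`, a finite grid `S ⊆ [a, b]` such
that each `t ∈ [a, b]` lies between grid points `x ≤ t ≤ y` with `m y - m x ≤ η`. Since both
`mn n ω` and `m` are monotone, `|mn n ω t - m t| ≤ 2η` for all `t` as soon as this holds with `η`
on the grid. Hence the event that the supremum exceeds `2η` lies in a finite union of events
`{η < |mn n ω x - m x|}`, `x ∈ S`, whose probabilities all tend to `0`.
-/

theorem exists_lt_mem_Icc_succ {α : Type*} [LinearOrder α] (p : ℕ → α) {t : α} :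
    ∀ {N : ℕ}, 0 < N → p 0 ≤ t → t ≤ p N → ∃ i < N, t ∈ Icc (p i) (p (i + 1))
  | 0, hN, _, _ => absurd hN (lt_irrefl 0)
  | N + 1, _, h0, htN => by
    rcases le_or_gt t (p N) with ht | ht
    · rcases N.eq_zero_or_pos with rfl | hN
      · exact ⟨0, Nat.one_pos, h0, htN⟩
      · obtain ⟨i, hi, hti⟩ := exists_lt_mem_Icc_succ p hN h0 ht
        exact ⟨i, hi.trans N.lt_succ_self, hti⟩
    · exact ⟨N, N.lt_succ_self, ht.le, htN⟩

def IsBracketing {α : Type*} [Preorder α] (g : α → ℝ) (s : Set α) (η : ℝ) (S : Finset α) :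
    Prop :=
  ↑S ⊆ s ∧ ∀ t ∈ s, ∃ x ∈ S, ∃ y ∈ S, x ≤ t ∧ t ≤ y ∧ g y - g x ≤ η

theorem ContinuousOn.exists_isBracketing {g : ℝ → ℝ} {a b : ℝ} (hab : a ≤ b)
    (hg : ContinuousOn g (Icc a b)) {η : ℝ} (hη : 0 < η) :
    ∃ S, IsBracketing g (Icc a b) η S := by
  obtain ⟨δ, hδ, hgδ⟩ := Metric.uniformContinuousOn_iff.mp
    (isCompact_Icc.uniformContinuousOn_of_continuous hg) η hη
  obtain ⟨N, hN⟩ := exists_nat_gt ((b - a) / δ)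
  have hN0 : (0 : ℝ) < N := (div_nonneg (sub_nonneg.mpr hab) hδ.le).trans_lt hN
  set h := (b - a) / N
  have hh : 0 ≤ h := div_nonneg (sub_nonneg.mpr hab) hN0.le
  have hhδ : h < δ := by
    rw [div_lt_iff₀ hN0]
    rw [div_lt_iff₀ hδ] at hN
    linarith
  set p : ℕ → ℝ := fun i => a + i * h
  have hpN : p N = b := by simp only [p, h]; field_simp; ring
  have hp : ∀ i ≤ N, p i ∈ Icc a b := fun i hi => by
    refine ⟨le_add_of_nonneg_right (by positivity), ?_⟩
    rw [← hpN]
    simp only [p]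
    gcongr
  refine ⟨(Finset.range (N + 1)).image p, ?_, fun t ht => ?_⟩
  · simpa [Set.subset_def, Nat.lt_succ_iff] using hp
  obtain ⟨i, hiN, hti⟩ :=
    exists_lt_mem_Icc_succ p (by exact_mod_cast hN0) (by simpa [p] using ht.1) (hpN ▸ ht.2)
  refine ⟨p i, Finset.mem_image_of_mem p (Finset.mem_range.mpr (by omega)), p (i + 1),
    Finset.mem_image_of_mem p (Finset.mem_range.mpr (by omega)), hti.1, hti.2, ?_⟩
  have hstep : p (i + 1) - p i = h := by simp only [p]; push_cast; ring
  have hdist : dist (p (i + 1)) (p i) < δ := by rwa [Real.dist_eq, hstep, abs_of_nonneg hh]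
  have hgstep := hgδ _ (hp _ hiN) _ (hp _ hiN.le) hdist
  rw [Real.dist_eq] at hgstep
  exact (le_abs_self _).trans hgstep.le

section

variable {α : Type*} [Preorder α] {f g : α → ℝ} {s : Set α} {η : ℝ} {S : Finset α}

theorem IsBracketing.abs_sub_le (hS : IsBracketing g s η S) (hf : MonotoneOn f s)
    (hg : MonotoneOn g s) (hfS : ∀ x ∈ S, |f x - g x| ≤ η) {t : α} (ht : t ∈ s) :
    |f t - g t| ≤ 2 * η := by
  obtain ⟨x, hx, y, hy, hxt, hty, hgxy⟩ := hS.2 t ht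
  have hfx := abs_le.mp (hfS x hx)
  have hfy := abs_le.mp (hfS y hy)
  have := hf (hS.1 hx) ht hxt
  have := hf ht (hS.1 hy) hty
  have := hg (hS.1 hx) ht hxt
  have := hg ht (hS.1 hy) hty
  rw [abs_le]; constructor <;> linarith

theorem IsBracketing.iSup_abs_sub_le (hS : IsBracketing g s η S) (hf : MonotoneOn f s)
    (hg : MonotoneOn g s) (hfS : ∀ x ∈ S, |f x - g x| ≤ η) (hη : 0 ≤ η) :
    ⨆ t : s, |f t - g t| ≤ 2 * η :=
  Real.iSup_le (fun t => hS.abs_sub_le hf hg hfS t.2) (by positivity)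

end

theorem tendsto_measure_of_subset_biUnion {Ω ι β : Type*} [MeasurableSpace Ω] {μ : Measure Ω}
    {l : Filter β} (S : Finset ι) {A : β → Set Ω} {B : ι → β → Set Ω}
    (hAB : ∀ n, A n ⊆ ⋃ i ∈ S, B i n)
    (hB : ∀ i ∈ S, Tendsto (fun n => μ (B i n)) l (nhds 0)) :
    Tendsto (fun n => μ (A n)) l (nhds 0) := by
  have hsum : Tendsto (fun n => ∑ i ∈ S, μ (B i n)) l (nhds 0) := by
    simpa using tendsto_finsetSum S hB
  exact tendsto_of_tendsto_of_tendsto_of_le_of_le tendsto_const_nhds hsum (fun n => zero_le)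
    fun n => (measure_mono (hAB n)).trans (measure_biUnion_finset_le S _)

theorem stmt_5_general {Ω : Type*} [MeasurableSpace Ω] (P : Measure Ω) [IsProbabilityMeasure P]
    (a b : ℝ) (hab : a < b)
    (mn : ℕ → Ω → ℝ → ℝ) (m : ℝ → ℝ)
    (hmono : ∀ n, ∀ ω, MonotoneOn (mn n ω) (Set.Icc a b))
    (hmcont : ContinuousOn m (Set.Icc a b))
    (hmmono : MonotoneOn m (Set.Icc a b))
    (hconv : ∀ t ∈ Set.Icc a b, ∀ ε : ℝ, 0 < ε →
      Tendsto (fun n => P {ω | ε < |mn n ω t - m t|}) atTop (nhds 0)) :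
    ∀ ε : ℝ, 0 < ε →
      Tendsto (fun n => P {ω | ε < ⨆ t : Set.Icc a b, |mn n ω t - m t|})
        atTop (nhds 0) := by
  intro ε hε
  obtain ⟨S, hS⟩ := hmcont.exists_isBracketing hab.le (half_pos hε)
  refine tendsto_measure_of_subset_biUnion S (fun n ω hω => ?_)
    fun x hx => hconv x (hS.1 hx) _ (half_pos hε)
  by_contra hω'
  simp only [mem_iUnion, mem_ofPred_eq, not_exists, not_lt] at hω hω'
  have := hS.iSup_abs_sub_le (hmono n ω) hmmono hω' (half_pos hε).le
  linarith

/-- Pointwise convergence in probability of monotone random functions to a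
continuous nonrandom monotone limit implies uniform convergence in probability. -/
theorem stmt_5 {Ω : Type*} [MeasurableSpace Ω] (P : Measure Ω) [IsProbabilityMeasure P]
    (a b : ℝ) (hab : a < b)
    (mn : ℕ → Ω → ℝ → ℝ) (m : ℝ → ℝ)
    (hmono : ∀ n, ∀ ω, MonotoneOn (mn n ω) (Set.Icc a b))
    (hmeas : ∀ n, ∀ t ∈ Set.Icc a b, Measurable (fun ω => mn n ω t))
    (hmcont : ContinuousOn m (Set.Icc a b))
    (hmmono : MonotoneOn m (Set.Icc a b))
    (hconv : ∀ t ∈ Set.Icc a b, ∀ ε : ℝ, 0 < ε →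
      Tendsto (fun n => P {ω | ε < |mn n ω t - m t|}) atTop (nhds 0)) :
    ∀ ε : ℝ, 0 < ε →
      Tendsto (fun n => P {ω | ε < ⨆ t : Set.Icc a b, |mn n ω t - m t|})
        atTop (nhds 0) :=
  stmt_5_general P a b hab mn m hmono hmcont hmmono hconv
end

section
/- Let I ⊆ ℝ be an open interval and let f_n (n ∈ ℕ) and f be convex real-valued functions on I such that f_n → f uniformly on every compact subset of I. Then the left derivatives converge in L²_loc: for every compact interval [c,d] ⊂ I, ∫_{[c,d]} (∂_ℓ f_n(z) − ∂_ℓ f(z))² dz → 0 as n → ∞. -/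
/-!
Fix `0 < h`. Convexity traps the left derivative at `x` between the difference quotients of step
`h` on either side of `x`, and replacing `f n` by `g` in these quotients costs at most `τ` once
`|f n - g| ≤ τ h / 2` near `[c, d]`. So `|∂ₗ f n - ∂ₗ g| ≤ Δ + τ` with
`Δ x = slope g x (x + h) - slope g (x - h) x`, which lies in `[0, 2L]` for a Lipschitz constant `L`
of `g` near `[c, d]`. The integral of `Δ` over `[c, d]` telescopes to two integrals over intervals
of length `h`, hence is at most `2 L h`, and `∫ (∂ₗ f n - ∂ₗ g)² ≤ 8 L² h + 2 (d - c) τ²`.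
Let `n → ∞` and then `h → 0`.
-/

open Filter Set MeasureTheory
open scoped Topology

lemma tendsto_zero_of_eventually_le_of_tendsto {α ι : Type*} {la : Filter α} {l : Filter ι}
    [l.NeBot] {a : α → ℝ} {b : ι → ℝ} (ha : ∀ n, 0 ≤ a n) (hb : Tendsto b l (𝓝 0))
    (hab : ∀ᶠ i in l, ∀ᶠ n in la, a n ≤ b i) : Tendsto a la (𝓝 0) := by
  refine tendsto_order.2 ⟨fun ε hε => .of_forall fun n => hε.trans_le (ha n), fun ε hε => ?_⟩
  obtain ⟨i, hi, hbi⟩ := (hab.and (hb.eventually (gt_mem_nhds hε))).exists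
  exact hi.mono fun n hn => hn.trans_lt hbi

lemma Set.OrdConnected.exists_Icc_sub_add_subset {I : Set ℝ} (hIconn : I.OrdConnected)
    (hI : IsOpen I) {c d : ℝ} (hc : c ∈ I) (hd : d ∈ I) :
    ∃ δ > 0, Icc (c - δ) (d + δ) ⊆ I := by
  obtain ⟨δc, hδc, hc'⟩ := Metric.isOpen_iff.1 hI c hc
  obtain ⟨δd, hδd, hd'⟩ := Metric.isOpen_iff.1 hI d hd
  have hδ : min δc δd / 2 < min δc δd := by linarith [lt_min hδc hδd]
  refine ⟨min δc δd / 2, by positivity, hIconn.out (hc' ?_) (hd' ?_)⟩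
  · rw [Real.ball_eq_Ioo]; constructor <;> linarith [min_le_left δc δd]
  · rw [Real.ball_eq_Ioo]; constructor <;> linarith [min_le_right δc δd]

lemma ConvexOn.le_slope_of_hasDerivWithinAt_Iio {S : Set ℝ} {f : ℝ → ℝ} {w x y f' : ℝ}
    (hf : ConvexOn ℝ S f) (hw : w ∈ S) (hy : y ∈ S) (hwx : w < x) (hxy : x < y)
    (hf' : HasDerivWithinAt f f' (Iio x) x) : f' ≤ slope f x y := by
  apply le_of_tendsto <| (hasDerivWithinAt_iff_tendsto_slope' self_notMem_Iio).mp hf'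
  filter_upwards [Ioo_mem_nhdsLT hwx] with t ht
  rw [slope_comm, slope_def_field, slope_def_field]
  exact hf.slope_mono_adjacent (hf.1.ordConnected.out hw hy ⟨ht.1.le, (ht.2.trans hxy).le⟩) hy
    ht.2 hxy

lemma abs_slope_sub_slope_le {F G : ℝ → ℝ} {a b η : ℝ} (hab : a < b) (ha : |F a - G a| ≤ η)
    (hb : |F b - G b| ≤ η) : |slope F a b - slope G a b| ≤ 2 * η / (b - a) := by
  rw [slope_def_field, slope_def_field, ← sub_div, abs_div, abs_of_pos (sub_pos.2 hab)]
  gcongr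
  calc |F b - F a - (G b - G a)| = |(F b - G b) - (F a - G a)| := by ring_nf
    _ ≤ |F b - G b| + |F a - G a| := abs_sub _ _
    _ ≤ 2 * η := by linarith

lemma LipschitzOnWith.abs_slope_le {G : ℝ → ℝ} {K : Set ℝ} {L : NNReal}
    (hG : LipschitzOnWith L G K) {a b : ℝ} (ha : a ∈ K) (hb : b ∈ K) : |slope G a b| ≤ L := by
  rcases eq_or_ne a b with rfl | hne
  · simp
  rw [slope_def_field, abs_div, div_le_iff₀ (abs_pos.2 (sub_ne_zero.2 hne.symm))]
  simpa [Real.dist_eq] using hG.dist_le_mul b hb a ha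

lemma ConvexOn.abs_sub_le_of_hasDerivWithinAt_Iio {S : Set ℝ} {F G : ℝ → ℝ} {F' G' x h η : ℝ}
    (hF : ConvexOn ℝ S F) (hG : ConvexOn ℝ S G) (hh : 0 < h) (hxm : x - h ∈ S) (hxp : x + h ∈ S)
    (hF' : HasDerivWithinAt F F' (Iio x) x) (hG' : HasDerivWithinAt G G' (Iio x) x)
    (hη : ∀ y ∈ Icc (x - h) (x + h), |F y - G y| ≤ η) :
    |F' - G'| ≤ slope G x (x + h) - slope G (x - h) x + 2 * η / h := by
  have hx : x ∈ S := hF.1.ordConnected.out hxm hxp ⟨by linarith, by linarith⟩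
  have hxm' : x - h < x := by linarith
  have hxp' : x < x + h := by linarith
  have hFr := hF.le_slope_of_hasDerivWithinAt_Iio hxm hxp hxm' hxp' hF'
  have hGr := hG.le_slope_of_hasDerivWithinAt_Iio hxm hxp hxm' hxp' hG'
  have hFl := hF.slope_le_of_hasDerivWithinAt_Iio hxm hx hxm' hF'
  have hGl := hG.slope_le_of_hasDerivWithinAt_Iio hxm hx hxm' hG'
  have hr := abs_slope_sub_slope_le hxp' (hη x ⟨hxm'.le, hxp'.le⟩) (hη _ ⟨by linarith, le_rfl⟩)
  have hl := abs_slope_sub_slope_le hxm' (hη _ ⟨le_rfl, by linarith⟩) (hη x ⟨hxm'.le, hxp'.le⟩)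
  rw [add_sub_cancel_left] at hr
  rw [sub_sub_cancel] at hl
  rw [abs_le] at hr hl ⊢
  constructor <;> linarith

lemma ConvexOn.sq_sub_le_of_hasDerivWithinAt_Iio {S : Set ℝ} {F G : ℝ → ℝ} {F' G' x h τ : ℝ}
    {L : NNReal} (hF : ConvexOn ℝ S F) (hG : ConvexOn ℝ S G) (hGL : LipschitzOnWith L G S)
    (hh : 0 < h) (hxm : x - h ∈ S) (hxp : x + h ∈ S)
    (hF' : HasDerivWithinAt F F' (Iio x) x) (hG' : HasDerivWithinAt G G' (Iio x) x)
    (hFG : ∀ y ∈ Icc (x - h) (x + h), |F y - G y| ≤ τ * h / 2) :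
    (F' - G') ^ 2 ≤ 4 * L * (slope G x (x + h) - slope G (x - h) x) + 2 * τ ^ 2 := by
  have key := hF.abs_sub_le_of_hasDerivWithinAt_Iio hG hh hxm hxp hF' hG' hFG
  rw [show 2 * (τ * h / 2) / h = τ by field_simp] at key
  have hΔ0 : 0 ≤ slope G x (x + h) - slope G (x - h) x := by
    have := hG.slope_mono_adjacent hxm hxp (by linarith : x - h < x) (by linarith : x < x + h)
    simp only [slope_def_field]
    linarith
  have hΔL : slope G x (x + h) - slope G (x - h) x ≤ 2 * L := by
    have hx : x ∈ S := hF.1.ordConnected.out hxm hxp ⟨by linarith, by linarith⟩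
    have hr := abs_le.1 (hGL.abs_slope_le hx hxp)
    have hl := abs_le.1 (hGL.abs_slope_le hxm hx)
    linarith
  nlinarith [sq_abs (F' - G'), pow_le_pow_left₀ (abs_nonneg _) key 2,
    sq_nonneg (slope G x (x + h) - slope G (x - h) x - τ), mul_le_mul_of_nonneg_left hΔL hΔ0]

lemma IntervalIntegrable.mono_Icc {E : Type*} [NormedAddCommGroup E] {φ : ℝ → E}
    {μ : Measure ℝ} {a b p q : ℝ}
    (hφ : IntervalIntegrable φ μ a b) (hp : p ∈ Icc a b) (hq : q ∈ Icc a b) :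
    IntervalIntegrable φ μ p q :=
  hφ.mono_set <| uIcc_subset_uIcc (Icc_subset_uIcc hp) (Icc_subset_uIcc hq)

lemma intervalIntegral.integral_sub_comp_sub_le {φ : ℝ → ℝ} {a b h L : ℝ} (hab : a ≤ b)
    (hh : 0 ≤ h) (hφ : IntervalIntegrable φ volume (a - h) b)
    (hL : ∀ x ∈ Icc (a - h) b, |φ x| ≤ L) :
    ∫ x in a..b, (φ x - φ (x - h)) ≤ 2 * L * h := by
  have bound : ∀ p ∈ Icc a b, |∫ x in (p - h)..p, φ x| ≤ L * h := by
    intro p hp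
    have := norm_integral_le_of_norm_le_const (a := p - h) (b := p) (C := L) (f := φ)
      fun x hx => by
        rw [uIoc_of_le (by linarith)] at hx
        exact hL x ⟨by linarith [hx.1, hp.1], hx.2.trans hp.2⟩
    simpa [abs_of_nonneg hh] using this
  have hφab : IntervalIntegrable φ volume a b :=
    hφ.mono_Icc ⟨by linarith, hab⟩ ⟨by linarith, le_rfl⟩
  have hφab' : IntervalIntegrable φ volume (a - h) (b - h) :=
    hφ.mono_Icc ⟨le_rfl, by linarith⟩ ⟨by linarith, by linarith⟩
  rw [integral_sub hφab (by simpa using hφab'.comp_sub_right h), integral_comp_sub_right,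
    integral_interval_sub_interval_comm' hφab hφab'
      (hφ.mono_Icc ⟨by linarith, hab⟩ ⟨le_rfl, by linarith⟩)]
  have hb := abs_le.1 (bound b ⟨hab, le_rfl⟩)
  have ha := abs_le.1 (bound a ⟨le_rfl, hab⟩)
  linarith

lemma ConvexOn.integral_sq_sub_le_of_hasDerivWithinAt_Iio {F G DF DG : ℝ → ℝ}
    {c d δ h τ : ℝ} {L : NNReal} (hF : ConvexOn ℝ (Icc (c - δ) (d + δ)) F)
    (hG : ConvexOn ℝ (Icc (c - δ) (d + δ)) G)
    (hGL : LipschitzOnWith L G (Icc (c - δ) (d + δ))) (hcd : c ≤ d) (hh : 0 < h) (hhδ : h ≤ δ)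
    (hDF : ∀ x ∈ Icc c d, HasDerivWithinAt F (DF x) (Iio x) x)
    (hDG : ∀ x ∈ Icc c d, HasDerivWithinAt G (DG x) (Iio x) x)
    (hFG : ∀ y ∈ Icc (c - δ) (d + δ), |F y - G y| ≤ τ * h / 2) :
    ∫ z in Icc c d, (DF z - DG z) ^ 2 ≤ 8 * L ^ 2 * h + 2 * (d - c) * τ ^ 2 := by
  set φ : ℝ → ℝ := fun x => slope G x (x + h)
  have hφL : ∀ x ∈ Icc (c - h) d, |φ x| ≤ L := fun x hx =>
    hGL.abs_slope_le ⟨by linarith [hx.1], by linarith [hx.2]⟩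
      ⟨by linarith [hx.1], by linarith [hx.2]⟩
  have hφ : IntervalIntegrable φ volume (c - h) d := by
    refine IntervalIntegrable.intervalIntegrable_slope ?_ (by linarith) hh.le
    refine (hGL.continuousOn.mono ?_).intervalIntegrable
    rw [uIcc_of_le (by linarith)]
    exact Icc_subset_Icc (by linarith) (by linarith)
  have hpointwise : ∀ x ∈ Icc c d, (DF x - DG x) ^ 2 ≤ 4 * L * (φ x - φ (x - h)) + 2 * τ ^ 2 := by
    intro x hx
    simpa [φ] using hF.sq_sub_le_of_hasDerivWithinAt_Iio hG hGL hh
      ⟨by linarith [hx.1], by linarith [hx.2]⟩ ⟨by linarith [hx.1], by linarith [hx.2]⟩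
      (hDF x hx) (hDG x hx) fun y hy => hFG y ⟨by linarith [hy.1, hx.1], by linarith [hy.2, hx.2]⟩
  have hΔ : IntervalIntegrable (fun x => φ x - φ (x - h)) volume c d :=
    (hφ.mono_Icc ⟨by linarith, hcd⟩ ⟨by linarith, le_rfl⟩).sub <| by
      simpa using (hφ.mono_Icc (p := c - h) (q := d - h) ⟨le_rfl, by linarith⟩
        ⟨by linarith, by linarith⟩).comp_sub_right h
  have hmajorant : IntegrableOn (fun z => 4 * L * (φ z - φ (z - h)) + 2 * τ ^ 2) (Icc c d) :=
    (intervalIntegrable_iff_integrableOn_Icc_of_le hcd).1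
      ((hΔ.const_mul _).add intervalIntegrable_const)
  calc ∫ z in Icc c d, (DF z - DG z) ^ 2
      ≤ ∫ z in Icc c d, (4 * L * (φ z - φ (z - h)) + 2 * τ ^ 2) :=
        integral_mono_of_nonneg (.of_forall fun _ => sq_nonneg _) hmajorant
          (ae_restrict_of_forall_mem measurableSet_Icc hpointwise)
    _ = ∫ z in c..d, (4 * L * (φ z - φ (z - h)) + 2 * τ ^ 2) := by
        rw [intervalIntegral.integral_of_le hcd, integral_Icc_eq_integral_Ioc]
    _ = 4 * L * (∫ z in c..d, (φ z - φ (z - h))) + 2 * (d - c) * τ ^ 2 := by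
        rw [intervalIntegral.integral_add (hΔ.const_mul _) intervalIntegrable_const,
          intervalIntegral.integral_const_mul, intervalIntegral.integral_const, smul_eq_mul]
        ring
    _ ≤ 4 * L * (2 * L * h) + 2 * (d - c) * τ ^ 2 := by
        gcongr
        exact intervalIntegral.integral_sub_comp_sub_le hcd hh.le hφ hφL
    _ = 8 * L ^ 2 * h + 2 * (d - c) * τ ^ 2 := by ring

/-- For convex functions `f n` converging to a convex function `g` uniformly on
every compact subset of an open interval `I`, the left derivatives converge in
`L²_loc`: for every compact interval `[c,d] ⊆ I`,
`∫_{[c,d]} (∂ₗ (f n) z − ∂ₗ g z)² dz → 0`. Left derivatives are encoded via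
`HasDerivWithinAt` on `Iio x`. -/
theorem stmt_7 (I : Set ℝ) (hIopen : IsOpen I) (hIconn : I.OrdConnected)
    (f : ℕ → ℝ → ℝ) (g : ℝ → ℝ)
    (hf : ∀ n, ConvexOn ℝ I (f n)) (hg : ConvexOn ℝ I g)
    (Dl : ℕ → ℝ → ℝ) (Dlg : ℝ → ℝ)
    (hDl : ∀ n, ∀ x ∈ I, HasDerivWithinAt (f n) (Dl n x) (Iio x) x)
    (hDlg : ∀ x ∈ I, HasDerivWithinAt g (Dlg x) (Iio x) x)
    (hunif : ∀ K : Set ℝ, IsCompact K → K ⊆ I →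
      TendstoUniformlyOn (fun n x => f n x) g atTop K) :
    ∀ c d : ℝ, Set.Icc c d ⊆ I →
      Tendsto (fun n => ∫ z in Set.Icc c d, (Dl n z - Dlg z) ^ 2)
        atTop (nhds 0) := by
  intro c d hcd
  rcases lt_or_ge d c with hdc | hle
  · simp [Icc_eq_empty_of_lt hdc]
  obtain ⟨δ, hδ, hK⟩ :=
    hIconn.exists_Icc_sub_add_subset hIopen (hcd ⟨le_rfl, hle⟩) (hcd ⟨hle, le_rfl⟩)
  obtain ⟨L, hL⟩ :=
    ((hg.locallyLipschitzOn hIopen).mono hK).exists_lipschitzOnWith_of_compact isCompact_Icc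
  have hbound : Tendsto (fun p : ℝ × ℝ => 8 * L ^ 2 * p.1 + 2 * (d - c) * p.2 ^ 2)
      (𝓝[>] 0 ×ˢ 𝓝[>] 0) (𝓝 0) := by
    refine ((by fun_prop : Continuous _).tendsto' (0, 0) 0 (by simp)).mono_left ?_
    rw [nhds_prod_eq]
    exact prod_mono nhdsWithin_le_nhds nhdsWithin_le_nhds
  refine tendsto_zero_of_eventually_le_of_tendsto (fun n => integral_nonneg fun z => sq_nonneg _)
    hbound ?_
  filter_upwards [prod_mem_prod (Ioc_mem_nhdsGT hδ) self_mem_nhdsWithin]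
    with ⟨h, τ⟩ ⟨⟨hh, hhδ⟩, hτ⟩
  filter_upwards [Metric.tendstoUniformlyOn_iff.1 (hunif _ isCompact_Icc hK) (τ * h / 2)
    (by simp only [mem_Ioi] at hτ; positivity)] with n hn
  exact ((hf n).subset hK (convex_Icc _ _)).integral_sq_sub_le_of_hasDerivWithinAt_Iio
    (hg.subset hK (convex_Icc _ _)) hL hle hh hhδ (fun x hx => hDl n x (hcd hx))
    (fun x hx => hDlg x (hcd hx))
    fun y hy => by simpa [Real.dist_eq, abs_sub_comm] using (hn y hy).le
end

section
/- Fix h ∈ ℝ. Let M(I) denote the set of monotone nondecreasing left-continuous real-valued functions on an interval I. Define the concatenation map C_h : M(−∞,0) × M(0,∞) → M(−∞,∞) by C_h(f,g)(x) = f(x) ∧ h for x < 0, C_h(f,g)(0) = (lim_{u↑0} f(u)) ∧ h, and C_h(f,g)(x) = g(x) ∨ h for x > 0, where ∧ is min and ∨ is max. Suppose f_n, f ∈ M(−∞,0) with ∫_K (f_n(x) − f(x))² dx → 0 for every compact set K ⊂ (−∞,0), and g_n, g ∈ M(0,∞) with ∫_K (g_n(x) − g(x))² dx → 0 for every compact set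 K ⊂ (0,∞). Then ∫_K (C_h(f_n,g_n)(x) − C_h(f,g)(x))² dx → 0 for every compact set K ⊂ ℝ; in particular ∫_{[a,b]} (C_h(f_n,g_n)(x) − C_h(f,g)(x))² dx → 0 for all a < 0 < b. That is, C_h is continuous from (M(−∞,0) × M(0,∞), L²_loc × L²_loc) to (M(−∞,∞), L²_loc). -/
open Filter Set MeasureTheory

/-- The concatenation map `C_h` : it is `f ∧ h` on `(−∞,0)`,
`(lim_{u↑0} f u) ∧ h` at `0` (the limit of a monotone left-continuous `f` at `0⁻`
being its supremum over `(−∞,0)`), and `g ∨ h` on `(0,∞)`. -/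
noncomputable def concat (h : ℝ) (f g : ℝ → ℝ) : ℝ → ℝ := fun x =>
  if x < 0 then min (f x) h
  else if x = 0 then min (sSup (f '' Set.Iio 0)) h
  else max (g x) h

open Topology

/-! On `(-∞,0)` and `(0,∞)` the map `C_h` post-composes with `min · h`, resp. `max · h`, which
are 1-Lipschitz, so there the squared difference of the concatenations is dominated by that of
the `f`'s, resp. the `g`'s; the point `0` is null. What is left is a window `(-δ, δ)` around `0`.
`L²` convergence on `[-2,-1]` bounds `f n (-1)` eventually from below and on `[1,2]` bounds
`g n 1` eventually from above; as `C_h (f n) (g n)` is monotone off `0`, the integrand is then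
eventually uniformly bounded on `(-1,1)`, so the window contributes `O(δ)`. -/

lemma integrableOn_sq_sub_of_monotoneOn {φ ψ : ℝ → ℝ} {s : Set ℝ} {a b : ℝ}
    (hs : MeasurableSet s) (hsab : s ⊆ Icc a b) (ha : a ∈ s) (hb : b ∈ s)
    (hφ : MonotoneOn φ s) (hψ : MonotoneOn ψ s) :
    IntegrableOn (fun x => (φ x - ψ x) ^ 2) s := by
  have hmeas : AEStronglyMeasurable (fun x => (φ x - ψ x) ^ 2) (volume.restrict s) :=
    (((aemeasurable_restrict_of_monotoneOn hs hφ).sub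
      (aemeasurable_restrict_of_monotoneOn hs hψ)).pow_const 2).aestronglyMeasurable
  refine (integrableOn_const (C := (|φ b - ψ a| + |φ a - ψ b|) ^ 2)
    ((measure_mono hsab).trans_lt measure_Icc_lt_top).ne).mono' hmeas
    ((ae_restrict_iff' hs).2 (ae_of_all _ fun x hx => ?_))
  have h₁ : φ a - ψ b ≤ φ x - ψ x := by
    linarith [hφ ha hx (hsab hx).1, hψ hx hb (hsab hx).2]
  have h₂ : φ x - ψ x ≤ φ b - ψ a := by
    linarith [hφ hx hb (hsab hx).2, hψ ha hx (hsab hx).1]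
  rw [Real.norm_of_nonneg (sq_nonneg _)]
  exact sq_le_sq' (by linarith [neg_abs_le (φ a - ψ b), abs_nonneg (φ b - ψ a)])
    (by linarith [le_abs_self (φ b - ψ a), abs_nonneg (φ a - ψ b)])

lemma eventually_exists_lt_of_tendsto_setIntegral_zero {α : Type*} [MeasurableSpace α]
    {μ : Measure α} {F : ℕ → α → ℝ} {s : Set α} {c : ℝ} (hc : 0 < c)
    (hs : MeasurableSet s) (hμ₀ : μ s ≠ 0) (hμ : μ s ≠ ⊤) (hint : ∀ n, IntegrableOn (F n) s μ)
    (hconv : Tendsto (fun n => ∫ x in s, F n x ∂μ) atTop (𝓝 0)) :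
    ∀ᶠ n in atTop, ∃ x ∈ s, F n x < c := by
  have hpos : 0 < c * μ.real s := mul_pos hc (ENNReal.toReal_pos hμ₀ hμ)
  filter_upwards [hconv.eventually (gt_mem_nhds hpos)] with n hn
  by_contra! hge
  have : c * μ.real s ≤ ∫ x in s, F n x ∂μ := by
    rw [mul_comm, ← smul_eq_mul, ← setIntegral_const]
    exact setIntegral_mono_on (integrableOn_const hμ) (hint n) hs hge
  linarith

lemma eventually_bounds_of_tendsto_setIntegral_sq_sub {φ : ℕ → ℝ → ℝ} {ψ : ℝ → ℝ} {a b : ℝ}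
    (hab : a < b) (hφ : ∀ n, MonotoneOn (φ n) (Icc a b)) (hψ : MonotoneOn ψ (Icc a b))
    (hconv : Tendsto (fun n => ∫ x in Icc a b, (φ n x - ψ x) ^ 2) atTop (𝓝 0)) :
    ∀ᶠ n in atTop, ψ a - 1 ≤ φ n b ∧ φ n a ≤ ψ b + 1 := by
  have ha : a ∈ Icc a b := left_mem_Icc.2 hab.le
  have hb : b ∈ Icc a b := right_mem_Icc.2 hab.le
  have hvol : volume (Icc a b) ≠ 0 := by simp [hab]
  filter_upwards [eventually_exists_lt_of_tendsto_setIntegral_zero one_pos measurableSet_Icc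
    hvol measure_Icc_lt_top.ne
    (fun n => integrableOn_sq_sub_of_monotoneOn measurableSet_Icc subset_rfl ha hb (hφ n) hψ)
    hconv] with n ⟨x, hx, hlt⟩
  have hclose := abs_lt.1 ((sq_lt_one_iff_abs_lt_one _).1 hlt)
  constructor
  · linarith [hψ ha hx hx.1, hφ n hx hb hx.2]
  · linarith [hφ n ha hx hx.1, hψ hx hb hx.2]

lemma tendsto_setIntegral_Icc_of_tendsto_away_from_zero {D : ℕ → ℝ → ℝ} {M B : ℝ} (hM : 0 < M)
    (hD : ∀ n x, 0 ≤ D n x) (hint : ∀ n, IntegrableOn (D n) (Icc (-M) M))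
    (hB : ∀ᶠ n in atTop, ∀ᵐ x ∂(volume.restrict (Ioo (-1) 1)), D n x ≤ B)
    (hleft : ∀ δ ∈ Ioo 0 M, Tendsto (fun n => ∫ x in Icc (-M) (-δ), D n x) atTop (𝓝 0))
    (hright : ∀ δ ∈ Ioo 0 M, Tendsto (fun n => ∫ x in Icc δ M, D n x) atTop (𝓝 0)) :
    Tendsto (fun n => ∫ x in Icc (-M) M, D n x) atTop (𝓝 0) := by
  refine tendsto_order.2 ⟨fun ε hε => Eventually.of_forall fun n =>
    hε.trans_le (setIntegral_nonneg measurableSet_Icc fun x _ => hD n x), fun ε hε => ?_⟩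
  have hε₃ : 0 < ε / 3 := by positivity
  have hsmall : ∀ᶠ δ in 𝓝[>] (0 : ℝ), δ < M ∧ δ ≤ 1 ∧ B * (2 * δ) < ε / 3 := by
    have hcont : Tendsto (fun δ : ℝ => B * (2 * δ)) (𝓝 0) (𝓝 0) :=
      (by fun_prop : Continuous fun δ : ℝ => B * (2 * δ)).tendsto' 0 0 (by simp)
    exact nhdsWithin_le_nhds ((eventually_lt_nhds hM).and
      ((eventually_le_nhds one_pos).and (hcont.eventually (gt_mem_nhds hε₃))))
  obtain ⟨δ, ⟨hδM, hδ₁, hδB⟩, hδ⟩ := (hsmall.and self_mem_nhdsWithin).exists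
  filter_upwards [hB, (hleft δ ⟨hδ, hδM⟩).eventually (gt_mem_nhds hε₃),
    (hright δ ⟨hδ, hδM⟩).eventually (gt_mem_nhds hε₃)] with n hBn hl hr
  have hmid : ∫ x in Ioo (-δ) δ, D n x ≤ B * (2 * δ) := by
    have hbound : ∀ᵐ x ∂(volume.restrict (Ioo (-δ) δ)), ‖D n x‖ ≤ B :=
      (ae_restrict_of_ae_restrict_of_subset (Ioo_subset_Ioo (by linarith) hδ₁) hBn).mono
        fun x hx => (Real.norm_of_nonneg (hD n x)).trans_le hx
    have := (le_abs_self _).trans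
      (norm_setIntegral_le_of_norm_le_const_ae measure_Ioo_lt_top hbound)
    rwa [Real.volume_real_Ioo, max_eq_left (by linarith), sub_neg_eq_add, ← two_mul] at this
  have hsplit : Icc (-M) M = (Icc (-M) (-δ) ∪ Ioo (-δ) δ) ∪ Icc δ M := by
    rw [Icc_union_Ioo_eq_Ico (by linarith) (by linarith),
      Ico_union_Icc_eq_Icc (by linarith) hδM.le]
  have hdisj₁ : Disjoint (Icc (-M) (-δ)) (Ioo (-δ) δ) :=
    disjoint_left.2 fun x hx hx' => hx'.1.not_ge hx.2
  have hdisj₂ : Disjoint (Icc (-M) (-δ) ∪ Ioo (-δ) δ) (Icc δ M) :=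
    disjoint_left.2 fun x hx hx' => by
      rcases hx with hx | hx
      · linarith [hx.2, hx'.1]
      · exact hx.2.not_ge hx'.1
  have hint' {s : Set ℝ} (hs : s ⊆ Icc (-M) M) : IntegrableOn (D n) s := (hint n).mono_set hs
  rw [hsplit] at hint' ⊢
  rw [setIntegral_union hdisj₂ measurableSet_Icc (hint' subset_union_left)
      (hint' subset_union_right), setIntegral_union hdisj₁ measurableSet_Ioo
      (hint' (subset_union_left.trans subset_union_left))
      (hint' (subset_union_right.trans subset_union_left))]
  linarith

section Concat

variable {h : ℝ} {f g f' g' : ℝ → ℝ} {x : ℝ}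

@[simp]
lemma concat_of_neg (hx : x < 0) : concat h f g x = min (f x) h := if_pos hx

@[simp]
lemma concat_of_pos (hx : 0 < x) : concat h f g x = max (g x) h := by
  simp [concat, hx.not_gt, hx.ne']

lemma concat_monotoneOn (hf : MonotoneOn f (Iio 0)) (hg : MonotoneOn g (Ioi 0)) :
    MonotoneOn (concat h f g) {0}ᶜ := by
  intro x hx y hy hxy
  rcases lt_or_gt_of_ne hx with hx | hx <;> rcases lt_or_gt_of_ne hy with hy | hy
  · simpa [hx, hy] using min_le_min_right h (hf hx hy hxy)
  · simp [hx, hy]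
  · linarith
  · simpa [hx, hy] using max_le_max_right h (hg hx hy hxy)

lemma sq_concat_sub_concat_le_of_neg (hx : x < 0) :
    (concat h f g x - concat h f' g' x) ^ 2 ≤ (f x - f' x) ^ 2 := by
  rw [concat_of_neg hx, concat_of_neg hx, sq_le_sq]
  simpa using abs_min_sub_min_le_max (f x) h (f' x) h

lemma sq_concat_sub_concat_le_of_pos (hx : 0 < x) :
    (concat h f g x - concat h f' g' x) ^ 2 ≤ (g x - g' x) ^ 2 := by
  rw [concat_of_pos hx, concat_of_pos hx, sq_le_sq]
  exact abs_max_sub_max_le_abs _ _ _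

lemma integrableOn_sq_concat_sub_concat {M : ℝ} (hM : 0 < M)
    (hf : MonotoneOn f (Iio 0)) (hg : MonotoneOn g (Ioi 0))
    (hf' : MonotoneOn f' (Iio 0)) (hg' : MonotoneOn g' (Ioi 0)) :
    IntegrableOn (fun x => (concat h f g x - concat h f' g' x) ^ 2) (Icc (-M) M) := by
  have hmono {φ γ : ℝ → ℝ} (hφ : MonotoneOn φ (Iio 0)) (hγ : MonotoneOn γ (Ioi 0)) :
      MonotoneOn (concat h φ γ) (Icc (-M) M \ {0}) :=
    (concat_monotoneOn hφ hγ).mono (sdiff_subset_compl _ _)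
  refine IntegrableOn.congr_set_ae ?_ (sdiff_null_ae_eq_self (measure_singleton 0)).symm
  exact integrableOn_sq_sub_of_monotoneOn (measurableSet_Icc.diff (measurableSet_singleton 0))
    sdiff_subset ⟨⟨le_rfl, by linarith⟩, by simp [hM.ne']⟩ ⟨⟨by linarith, le_rfl⟩, by simp [hM.ne']⟩
    (hmono hf hg) (hmono hf' hg')

lemma tendsto_setIntegral_sq_concat_sub_concat_of_neg {f g : ℕ → ℝ → ℝ} {f₀ g₀ : ℝ → ℝ}
    {a b : ℝ} (hab : a ≤ b) (hb : b < 0)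
    (hf : ∀ n, MonotoneOn (f n) (Iio 0)) (hf₀ : MonotoneOn f₀ (Iio 0))
    (hg : ∀ n, MonotoneOn (g n) (Ioi 0)) (hg₀ : MonotoneOn g₀ (Ioi 0))
    (hconv : Tendsto (fun n => ∫ x in Icc a b, (f n x - f₀ x) ^ 2) atTop (𝓝 0)) :
    Tendsto (fun n => ∫ x in Icc a b, (concat h (f n) (g n) x - concat h f₀ g₀ x) ^ 2)
      atTop (𝓝 0) := by
  have hneg : Icc a b ⊆ Iio 0 := fun x hx => mem_Iio.2 (hx.2.trans_lt hb)
  have hint {φ ψ : ℝ → ℝ} (hφ : MonotoneOn φ (Icc a b)) (hψ : MonotoneOn ψ (Icc a b)) :=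
    integrableOn_sq_sub_of_monotoneOn measurableSet_Icc subset_rfl (left_mem_Icc.2 hab)
      (right_mem_Icc.2 hab) hφ hψ
  have hconcat {φ γ : ℝ → ℝ} (hφ : MonotoneOn φ (Iio 0)) (hγ : MonotoneOn γ (Ioi 0)) :
      MonotoneOn (concat h φ γ) (Icc a b) :=
    (concat_monotoneOn hφ hγ).mono fun x hx => (hneg hx).ne
  refine squeeze_zero (fun n => integral_nonneg fun x => sq_nonneg _) (fun n => ?_) hconv
  exact setIntegral_mono_on (hint (hconcat (hf n) (hg n)) (hconcat hf₀ hg₀))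
    (hint ((hf n).mono hneg) (hf₀.mono hneg)) measurableSet_Icc
    fun x hx => sq_concat_sub_concat_le_of_neg (hneg hx)

lemma tendsto_setIntegral_sq_concat_sub_concat_of_pos {f g : ℕ → ℝ → ℝ} {f₀ g₀ : ℝ → ℝ}
    {a b : ℝ} (hab : a ≤ b) (ha : 0 < a)
    (hf : ∀ n, MonotoneOn (f n) (Iio 0)) (hf₀ : MonotoneOn f₀ (Iio 0))
    (hg : ∀ n, MonotoneOn (g n) (Ioi 0)) (hg₀ : MonotoneOn g₀ (Ioi 0))
    (hconv : Tendsto (fun n => ∫ x in Icc a b, (g n x - g₀ x) ^ 2) atTop (𝓝 0)) :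
    Tendsto (fun n => ∫ x in Icc a b, (concat h (f n) (g n) x - concat h f₀ g₀ x) ^ 2)
      atTop (𝓝 0) := by
  have hpos : Icc a b ⊆ Ioi 0 := fun x hx => mem_Ioi.2 (ha.trans_le hx.1)
  have hint {φ ψ : ℝ → ℝ} (hφ : MonotoneOn φ (Icc a b)) (hψ : MonotoneOn ψ (Icc a b)) :=
    integrableOn_sq_sub_of_monotoneOn measurableSet_Icc subset_rfl (left_mem_Icc.2 hab)
      (right_mem_Icc.2 hab) hφ hψ
  have hconcat {φ γ : ℝ → ℝ} (hφ : MonotoneOn φ (Iio 0)) (hγ : MonotoneOn γ (Ioi 0)) :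
      MonotoneOn (concat h φ γ) (Icc a b) :=
    (concat_monotoneOn hφ hγ).mono fun x hx => (hpos hx).ne'
  refine squeeze_zero (fun n => integral_nonneg fun x => sq_nonneg _) (fun n => ?_) hconv
  exact setIntegral_mono_on (hint (hconcat (hf n) (hg n)) (hconcat hf₀ hg₀))
    (hint ((hg n).mono hpos) (hg₀.mono hpos)) measurableSet_Icc
    fun x hx => sq_concat_sub_concat_le_of_pos (hpos hx)

lemma eventually_ae_sq_concat_sub_concat_le {f g : ℕ → ℝ → ℝ} {f₀ g₀ : ℝ → ℝ}
    (hf : ∀ n, MonotoneOn (f n) (Iio 0)) (hf₀ : MonotoneOn f₀ (Iio 0))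
    (hg : ∀ n, MonotoneOn (g n) (Ioi 0)) (hg₀ : MonotoneOn g₀ (Ioi 0))
    (hfconv : Tendsto (fun n => ∫ x in Icc (-2) (-1), (f n x - f₀ x) ^ 2) atTop (𝓝 0))
    (hgconv : Tendsto (fun n => ∫ x in Icc 1 2, (g n x - g₀ x) ^ 2) atTop (𝓝 0)) :
    ∃ B, ∀ᶠ n in atTop, ∀ᵐ x ∂(volume.restrict (Ioo (-1) 1)),
      (concat h (f n) (g n) x - concat h f₀ g₀ x) ^ 2 ≤ B := by
  have hneg : Icc (-2 : ℝ) (-1) ⊆ Iio 0 := fun x hx => mem_Iio.2 (by linarith [hx.2])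
  have hpos : Icc (1 : ℝ) 2 ⊆ Ioi 0 := fun x hx => mem_Ioi.2 (by linarith [hx.1])
  set lo := min (f₀ (-2) - 1) h
  set hi := max (g₀ 2 + 1) h
  have hbounds {φ γ : ℝ → ℝ} (hφ : MonotoneOn φ (Iio 0)) (hγ : MonotoneOn γ (Ioi 0))
      (hφ₁ : f₀ (-2) - 1 ≤ φ (-1)) (hγ₁ : γ 1 ≤ g₀ 2 + 1) {x : ℝ} (hx : x ∈ Ioo (-1) 1)
      (hx₀ : x ≠ 0) :
      lo ≤ concat h φ γ x ∧ concat h φ γ x ≤ hi := by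
    have hmono := concat_monotoneOn (h := h) hφ hγ
    constructor
    · calc lo ≤ concat h φ γ (-1) := by
            rw [concat_of_neg (by norm_num)]; exact min_le_min_right h hφ₁
        _ ≤ concat h φ γ x := hmono (by norm_num) hx₀ hx.1.le
    · calc concat h φ γ x ≤ concat h φ γ 1 := hmono hx₀ (by norm_num) hx.2.le
        _ ≤ hi := by rw [concat_of_pos one_pos]; exact max_le_max_right h hγ₁
  refine ⟨(hi - lo) ^ 2, ?_⟩
  filter_upwards [eventually_bounds_of_tendsto_setIntegral_sq_sub (by norm_num)
      (fun n => (hf n).mono hneg) (hf₀.mono hneg) hfconv,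
    eventually_bounds_of_tendsto_setIntegral_sq_sub (by norm_num)
      (fun n => (hg n).mono hpos) (hg₀.mono hpos) hgconv] with n hfn hgn
  filter_upwards [ae_restrict_mem measurableSet_Ioo,
    ae_restrict_of_ae (Measure.ae_ne volume 0)] with x hx hx₀
  obtain ⟨hlo, hhi⟩ := hbounds (hf n) (hg n) hfn.1 hgn.2 hx hx₀
  have hf₀₁ : f₀ (-2) ≤ f₀ (-1) := hf₀ (by norm_num) (by norm_num) (by norm_num)
  have hg₀₁ : g₀ 1 ≤ g₀ 2 := hg₀ (by norm_num) (by norm_num) (by norm_num)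
  obtain ⟨hlo₀, hhi₀⟩ := hbounds hf₀ hg₀ (by linarith) (by linarith) hx hx₀
  exact sq_le_sq' (by linarith) (by linarith)

end Concat

theorem stmt_8_general (h : ℝ) (f : ℕ → ℝ → ℝ) (f₀ : ℝ → ℝ) (g : ℕ → ℝ → ℝ) (g₀ : ℝ → ℝ)
    (hfmono : ∀ n, MonotoneOn (f n) (Set.Iio 0)) (hf₀mono : MonotoneOn f₀ (Set.Iio 0))
    (hgmono : ∀ n, MonotoneOn (g n) (Set.Ioi 0)) (hg₀mono : MonotoneOn g₀ (Set.Ioi 0))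
    (hfconv : ∀ K : Set ℝ, IsCompact K → K ⊆ Set.Iio 0 →
      Tendsto (fun n => ∫ x in K, (f n x - f₀ x) ^ 2) atTop (nhds 0))
    (hgconv : ∀ K : Set ℝ, IsCompact K → K ⊆ Set.Ioi 0 →
      Tendsto (fun n => ∫ x in K, (g n x - g₀ x) ^ 2) atTop (nhds 0)) :
    (∀ K : Set ℝ, IsCompact K →
      Tendsto (fun n => ∫ x in K, (concat h (f n) (g n) x - concat h f₀ g₀ x) ^ 2)
        atTop (nhds 0)) ∧
    (∀ a b : ℝ, a < 0 → 0 < b →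
      Tendsto (fun n => ∫ x in Set.Icc a b,
          (concat h (f n) (g n) x - concat h f₀ g₀ x) ^ 2)
        atTop (nhds 0)) := by
  have hIcc_neg {a b : ℝ} (hb : b < 0) : Icc a b ⊆ Iio 0 := fun x hx => hx.2.trans_lt hb
  have hIcc_pos {a b : ℝ} (ha : 0 < a) : Icc a b ⊆ Ioi 0 := fun x hx => ha.trans_le hx.1
  have hcompact (K : Set ℝ) (hK : IsCompact K) :
      Tendsto (fun n => ∫ x in K, (concat h (f n) (g n) x - concat h f₀ g₀ x) ^ 2)
        atTop (𝓝 0) := by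
    obtain ⟨M, hM, hKM⟩ := hK.isBounded.subset_closedBall_lt 0 (0 : ℝ)
    rw [Real.closedBall_eq_Icc, zero_sub, zero_add] at hKM
    have hint n := integrableOn_sq_concat_sub_concat (h := h) hM (hfmono n) (hgmono n)
      hf₀mono hg₀mono
    obtain ⟨B, hB⟩ := eventually_ae_sq_concat_sub_concat_le (h := h) hfmono hf₀mono hgmono
      hg₀mono (hfconv _ isCompact_Icc (hIcc_neg (by norm_num)))
      (hgconv _ isCompact_Icc (hIcc_pos (by norm_num)))
    refine squeeze_zero (fun n => integral_nonneg fun x => sq_nonneg _)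
      (fun n => setIntegral_mono_set (hint n) (ae_of_all _ fun x => sq_nonneg _)
        hKM.eventuallyLE)
      (tendsto_setIntegral_Icc_of_tendsto_away_from_zero hM (fun n x => sq_nonneg _) hint hB
        (fun δ hδ => ?_) (fun δ hδ => ?_))
    · exact tendsto_setIntegral_sq_concat_sub_concat_of_neg (by linarith [hδ.2])
        (by linarith [hδ.1])
        hfmono hf₀mono hgmono hg₀mono (hfconv _ isCompact_Icc (hIcc_neg (by linarith [hδ.1])))
    · exact tendsto_setIntegral_sq_concat_sub_concat_of_pos hδ.2.le hδ.1
        hfmono hf₀mono hgmono hg₀mono (hgconv _ isCompact_Icc (hIcc_pos hδ.1))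
  exact ⟨hcompact, fun a b _ _ => hcompact _ isCompact_Icc⟩

/-- Continuity of the concatenation map `C_h` from
`(M(−∞,0) × M(0,∞), L²_loc × L²_loc)` to `(M(−∞,∞), L²_loc)`:
if `f n → f₀` in `L²` on every compact subset of `(−∞,0)` and `g n → g₀` in `L²`
on every compact subset of `(0,∞)`, where all functions are monotone nondecreasing
and left-continuous on the respective intervals, then
`C_h (f n) (g n) → C_h f₀ g₀` in `L²` on every compact subset of `ℝ`; in
particular on every `[a,b]` with `a < 0 < b`. -/
theorem stmt_8 (h : ℝ) (f : ℕ → ℝ → ℝ) (f₀ : ℝ → ℝ) (g : ℕ → ℝ → ℝ) (g₀ : ℝ → ℝ)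
    (hfmono : ∀ n, MonotoneOn (f n) (Set.Iio 0)) (hf₀mono : MonotoneOn f₀ (Set.Iio 0))
    (hflc : ∀ n, ∀ x : ℝ, x < 0 → Tendsto (f n) (nhdsWithin x (Set.Iio x)) (nhds (f n x)))
    (hf₀lc : ∀ x : ℝ, x < 0 → Tendsto f₀ (nhdsWithin x (Set.Iio x)) (nhds (f₀ x)))
    (hgmono : ∀ n, MonotoneOn (g n) (Set.Ioi 0)) (hg₀mono : MonotoneOn g₀ (Set.Ioi 0))
    (hglc : ∀ n, ∀ x : ℝ, 0 < x → Tendsto (g n) (nhdsWithin x (Set.Iio x)) (nhds (g n x)))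
    (hg₀lc : ∀ x : ℝ, 0 < x → Tendsto g₀ (nhdsWithin x (Set.Iio x)) (nhds (g₀ x)))
    (hfconv : ∀ K : Set ℝ, IsCompact K → K ⊆ Set.Iio 0 →
      Tendsto (fun n => ∫ x in K, (f n x - f₀ x) ^ 2) atTop (nhds 0))
    (hgconv : ∀ K : Set ℝ, IsCompact K → K ⊆ Set.Ioi 0 →
      Tendsto (fun n => ∫ x in K, (g n x - g₀ x) ^ 2) atTop (nhds 0)) :
    (∀ K : Set ℝ, IsCompact K →
      Tendsto (fun n => ∫ x in K, (concat h (f n) (g n) x - concat h f₀ g₀ x) ^ 2)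
        atTop (nhds 0)) ∧
    (∀ a b : ℝ, a < 0 → 0 < b →
      Tendsto (fun n => ∫ x in Set.Icc a b,
          (concat h (f n) (g n) x - concat h f₀ g₀ x) ^ 2)
        atTop (nhds 0)) :=
  stmt_8_general h f f₀ g g₀ hfmono hf₀mono hgmono hg₀mono hfconv hgconv
end

section
/- In the setting of the concatenation lemma: let θ ∈ ℝ and let f_n, f : (−∞,0) → ℝ be monotone nondecreasing functions with ∫_K (f_n − f)² → 0 for every compact K ⊂ (−∞,0). Then lim_{ε → 0⁺} limsup_{n → ∞} ∫_{[−ε,0)} (f_n(x) ∧ θ − f(x) ∧ θ)² dx = 0. In particular, for every ε ∈ (0,1) and every n, ∫_{[−ε,0)} (f_n(x) ∧ θ − f(x) ∧ θ)² dx ≤ 2 ∫_{[−ε−1,−1]} (f_n(x)² + f(x)²) dx + 4θ²ε. -/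
/-!
Monotonicity gives `|min (f x) θ| ≤ max |θ| |f (x - 1)|` for `x < 0`, so the window
`[-ε, 0)`, where nothing is known about the convergence, is controlled by its translate
`[-ε - 1, -1]`, a compact subset of `(-∞, 0)`. There `f n → f₀` in `L²`, so the `limsup` in `n`
is at most `6 ∫_{[-ε-1,-1]} f₀² + 4θ²ε`, which tends to `0` with `ε` by absolute continuity of
the integral.
-/

open Filter Set MeasureTheory Topology

theorem sq_min_le_sq_add_sq_of_le {u v θ : ℝ} (hvu : v ≤ u) :
    min u θ ^ 2 ≤ v ^ 2 + θ ^ 2 := by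
  rcases le_total u θ with h | h
  · rw [min_eq_left h]
    rcases le_total 0 u with hu | hu
    · nlinarith [sq_nonneg v]
    · nlinarith [sq_nonneg θ]
  · rw [min_eq_right h]
    nlinarith [sq_nonneg v]

theorem sq_min_sub_min_le {u v u' v' θ : ℝ} (hvu : v ≤ u) (hvu' : v' ≤ u') :
    (min u θ - min u' θ) ^ 2 ≤ 2 * (v ^ 2 + v' ^ 2) + 4 * θ ^ 2 := by
  nlinarith [sq_min_le_sq_add_sq_of_le (θ := θ) hvu, sq_min_le_sq_add_sq_of_le (θ := θ) hvu',
    sq_nonneg (min u θ + min u' θ)]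

theorem preimage_sub_Ico_sub (a b d : ℝ) : (· - d) ⁻¹' Ico (a - d) (b - d) = Ico a b := by
  simp only [preimage_sub_const_Ico, sub_add_cancel]

theorem integral_Ico_comp_sub {E : Type*} [NormedAddCommGroup E] [NormedSpace ℝ E] (f : ℝ → E)
    (a b d : ℝ) :
    ∫ x in Ico a b, f (x - d) = ∫ x in Ico (a - d) (b - d), f x := by
  rw [← preimage_sub_Ico_sub]
  exact (measurePreserving_sub_right volume d).setIntegral_preimage_emb
    (measurableEmbedding_subRight d) f _

theorem IntegrableOn.comp_sub_Ico {E : Type*} [NormedAddCommGroup E] {f : ℝ → E} {a b d : ℝ}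
    (hf : IntegrableOn f (Ico (a - d) (b - d))) : IntegrableOn (fun x => f (x - d)) (Ico a b) := by
  rw [← preimage_sub_Ico_sub]
  exact ((measurePreserving_sub_right volume d).integrableOn_comp_preimage
    (measurableEmbedding_subRight d)).2 hf

theorem integral_sq_add_sq_le {α : Type*} [MeasurableSpace α] {μ : Measure α} {g h : α → ℝ}
    (hg : MemLp g 2 μ) (hh : MemLp h 2 μ) :
    ∫ x, (g x ^ 2 + h x ^ 2) ∂μ ≤ 2 * ∫ x, (g x - h x) ^ 2 ∂μ + 3 * ∫ x, h x ^ 2 ∂μ := by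
  have hsub : Integrable (fun x => 2 * (g x - h x) ^ 2) μ := (hg.sub hh).integrable_sq.const_mul 2
  have hsq : Integrable (fun x => 3 * h x ^ 2) μ := hh.integrable_sq.const_mul 3
  rw [← integral_const_mul, ← integral_const_mul, ← integral_add hsub hsq]
  refine integral_mono (hg.integrable_sq.add hh.integrable_sq) (hsub.add hsq) fun x => ?_
  nlinarith [sq_nonneg (g x - 2 * h x)]

theorem limsup_mem_Icc_of_le_of_tendsto {ι : Type*} {l : Filter ι} [l.NeBot] {u v : ι → ℝ}
    {c : ℝ} (hu : ∀ i, 0 ≤ u i) (huv : ∀ i, u i ≤ v i) (hv : Tendsto v l (𝓝 c)) :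
    limsup u l ∈ Icc 0 c := by
  have hbdd : IsBoundedUnder (· ≤ ·) l u := hv.isBoundedUnder_le.mono_le (.of_forall huv)
  have hcobdd : IsCoboundedUnder (· ≤ ·) l u :=
    (isBoundedUnder_of ⟨0, hu⟩ : IsBoundedUnder (· ≥ ·) l u).isCoboundedUnder_le
  exact ⟨le_limsup_of_frequently_le (.of_forall hu) hbdd,
    (limsup_le_limsup (.of_forall huv) hcobdd hv.isBoundedUnder_le).trans hv.limsup_eq.le⟩

theorem tendsto_setIntegral_Icc_sub_nhdsGT_zero {g : ℝ → ℝ} {a b : ℝ} (hba : b < a)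
    (hg : IntegrableOn g (Icc b a)) :
    Tendsto (fun ε => ∫ x in Icc (a - ε) a, g x) (𝓝[>] 0) (𝓝 0) := by
  have hvol : Tendsto (fun ε => volume (Icc (a - ε) a)) (𝓝[>] 0) (𝓝 0) := by
    have : Tendsto ENNReal.ofReal (𝓝[>] 0) (𝓝 (ENNReal.ofReal 0)) :=
      ENNReal.continuous_ofReal.continuousWithinAt
    simpa [Real.volume_Icc] using this
  refine ((integrable_indicator_iff measurableSet_Icc).2 hg).tendsto_setIntegral_nhds_zero hvol
    |>.congr' ?_
  filter_upwards [Ioo_mem_nhdsGT (sub_pos.2 hba)] with ε hε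
  refine setIntegral_congr_fun measurableSet_Icc fun x hx => indicator_of_mem ?_ g
  exact ⟨by linarith [hx.1, hε.2], hx.2⟩

theorem integral_sq_min_sub_min_Ico_le (θ : ℝ) {g h : ℝ → ℝ} (hg : MonotoneOn g (Iio 0))
    (hh : MonotoneOn h (Iio 0)) {ε : ℝ} (hε : 0 ≤ ε) :
    (∫ x in Ico (-ε) 0, (min (g x) θ - min (h x) θ) ^ 2) ≤
      2 * (∫ x in Icc (-ε - 1) (-1), (g x ^ 2 + h x ^ 2)) + 4 * θ ^ 2 * ε := by
  set K := Icc (-ε - 1) (-1)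
  set H : ℝ → ℝ := fun y => 2 * (g y ^ 2 + h y ^ 2) + 4 * θ ^ 2
  have hK : K ⊆ Iio 0 := fun y hy => hy.2.trans_lt (by norm_num)
  have hsq : IntegrableOn (fun y => g y ^ 2 + h y ^ 2) K :=
    ((hg.mono hK).memLp_isCompact isCompact_Icc).integrable_sq.add
      ((hh.mono hK).memLp_isCompact isCompact_Icc).integrable_sq
  have hH : IntegrableOn H K := (hsq.const_mul 2).add (integrableOn_const measure_Icc_lt_top.ne)
  have hshift : Ico (-ε - 1) (0 - 1) = Ico (-ε - 1) (-1) := by rw [zero_sub]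
  have hH' : IntegrableOn (fun x => H (x - 1)) (Ico (-ε) 0) :=
    IntegrableOn.comp_sub_Ico (hshift ▸ hH.mono_set Ico_subset_Icc_self :)
  have hpt : ∀ x ∈ Ico (-ε) 0, (min (g x) θ - min (h x) θ) ^ 2 ≤ H (x - 1) := fun x hx => by
    have hx0 : x < 0 := hx.2
    have hx1 : x - 1 ∈ Iio 0 := show x - 1 < 0 by linarith
    exact sq_min_sub_min_le (hg hx1 hx0 (by linarith)) (hh hx1 hx0 (by linarith))
  calc ∫ x in Ico (-ε) 0, (min (g x) θ - min (h x) θ) ^ 2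
      ≤ ∫ x in Ico (-ε) 0, H (x - 1) :=
        integral_mono_of_nonneg (ae_of_all _ fun _ => sq_nonneg _) hH'
          (ae_restrict_of_forall_mem measurableSet_Ico hpt)
    _ = ∫ y in K, H y := by rw [integral_Ico_comp_sub, hshift, integral_Icc_eq_integral_Ico]
    _ = 2 * (∫ x in K, (g x ^ 2 + h x ^ 2)) + 4 * θ ^ 2 * ε := by
        change ∫ y in K, (2 * (g y ^ 2 + h y ^ 2) + 4 * θ ^ 2) = _
        rw [integral_add (hsq.const_mul 2) (integrableOn_const measure_Icc_lt_top.ne),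
          integral_const_mul, setIntegral_const, Real.volume_real_Icc_of_le (by linarith),
          smul_eq_mul]
        ring

theorem limsup_integral_sq_min_sub_min_Ico_mem_Icc (θ : ℝ) {f : ℕ → ℝ → ℝ} {f₀ : ℝ → ℝ}
    (hfmono : ∀ n, MonotoneOn (f n) (Iio 0)) (hf₀mono : MonotoneOn f₀ (Iio 0)) {ε : ℝ}
    (hε : 0 ≤ ε)
    (hconv : Tendsto (fun n => ∫ x in Icc (-ε - 1) (-1), (f n x - f₀ x) ^ 2) atTop (𝓝 0)) :
    limsup (fun n => ∫ x in Ico (-ε) 0, (min (f n x) θ - min (f₀ x) θ) ^ 2) atTop ∈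
      Icc 0 (6 * (∫ x in Icc (-ε - 1) (-1), f₀ x ^ 2) + 4 * θ ^ 2 * ε) := by
  set K := Icc (-ε - 1) (-1)
  have hK : K ⊆ Iio 0 := fun y hy => hy.2.trans_lt (by norm_num)
  have hL2 {g : ℝ → ℝ} (hg : MonotoneOn g (Iio 0)) : MemLp g 2 (volume.restrict K) :=
    (hg.mono hK).memLp_isCompact isCompact_Icc
  have hv : Tendsto (fun n =>
      2 * (2 * (∫ x in K, (f n x - f₀ x) ^ 2) + 3 * ∫ x in K, f₀ x ^ 2) + 4 * θ ^ 2 * ε)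
      atTop (𝓝 (6 * (∫ x in K, f₀ x ^ 2) + 4 * θ ^ 2 * ε)) := by
    convert (((hconv.const_mul 2).add_const _).const_mul 2).add_const _ using 2
    ring
  refine limsup_mem_Icc_of_le_of_tendsto (fun n => integral_nonneg fun _ => sq_nonneg _)
    (fun n => ?_) hv
  calc (∫ x in Ico (-ε) 0, (min (f n x) θ - min (f₀ x) θ) ^ 2)
      ≤ 2 * (∫ x in K, (f n x ^ 2 + f₀ x ^ 2)) + 4 * θ ^ 2 * ε :=
        integral_sq_min_sub_min_Ico_le θ (hfmono n) hf₀mono hε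
    _ ≤ _ := by
        gcongr
        exact integral_sq_add_sq_le (hL2 (hfmono n)) (hL2 hf₀mono)

/-- Boundary estimate for the concatenation lemma: if `f n → f₀` in `L²` on every
compact subset of `(−∞,0)`, with all functions monotone nondecreasing on `(−∞,0)`,
then `lim_{ε→0⁺} limsup_n ∫_{[−ε,0)} (f n x ∧ θ − f₀ x ∧ θ)² dx = 0`; moreover for
every `ε ∈ (0,1)` and every `n`,
`∫_{[−ε,0)} (f n x ∧ θ − f₀ x ∧ θ)² dx ≤ 2 ∫_{[−ε−1,−1]} ((f n x)² + (f₀ x)²) dx + 4θ²ε`. -/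
theorem stmt_9 (θ : ℝ) (f : ℕ → ℝ → ℝ) (f₀ : ℝ → ℝ)
    (hfmono : ∀ n, MonotoneOn (f n) (Set.Iio 0))
    (hf₀mono : MonotoneOn f₀ (Set.Iio 0))
    (hconv : ∀ K : Set ℝ, IsCompact K → K ⊆ Set.Iio 0 →
      Tendsto (fun n => ∫ x in K, (f n x - f₀ x) ^ 2) atTop (nhds 0)) :
    Tendsto (fun ε : ℝ =>
        limsup (fun n => ∫ x in Set.Ico (-ε) 0,
          (min (f n x) θ - min (f₀ x) θ) ^ 2) atTop)
      (nhdsWithin 0 (Set.Ioi 0)) (nhds 0) ∧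
    (∀ ε : ℝ, 0 < ε → ε < 1 → ∀ n : ℕ,
      (∫ x in Set.Ico (-ε) 0, (min (f n x) θ - min (f₀ x) θ) ^ 2) ≤
        2 * (∫ x in Set.Icc (-ε - 1) (-1), ((f n x) ^ 2 + (f₀ x) ^ 2)) +
          4 * θ ^ 2 * ε) := by
  refine ⟨?_, fun ε hε _ n => integral_sq_min_sub_min_Ico_le θ (hfmono n) hf₀mono hε.le⟩
  have hlimsup (ε : ℝ) (hε : 0 < ε) := limsup_integral_sq_min_sub_min_Ico_mem_Icc θ hfmono
    hf₀mono hε.le (hconv _ isCompact_Icc fun y hy => hy.2.trans_lt (by norm_num))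
  have hf₀ : IntegrableOn (fun x => f₀ x ^ 2) (Icc (-2) (-1)) :=
    ((hf₀mono.mono fun y hy => hy.2.trans_lt (by norm_num)).memLp_isCompact
      isCompact_Icc).integrable_sq
  have hB := tendsto_setIntegral_Icc_sub_nhdsGT_zero (by norm_num) hf₀
  simp only [show ∀ ε : ℝ, -1 - ε = -ε - 1 from fun ε => by ring] at hB
  have hlin : Tendsto (fun ε : ℝ => 4 * θ ^ 2 * ε) (𝓝[>] 0) (𝓝 0) :=
    tendsto_nhdsWithin_of_tendsto_nhds ((continuous_const_mul _).tendsto' 0 0 (mul_zero _))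
  refine tendsto_of_tendsto_of_tendsto_of_le_of_le' tendsto_const_nhds
    (by simpa using (hB.const_mul 6).add hlin) ?_ ?_ <;>
    filter_upwards [self_mem_nhdsWithin] with ε hε
  exacts [(hlimsup ε hε).1, (hlimsup ε hε).2]
end

section
/- Let c₀ > 0. Let f : ℝ → ℝ be a continuous nonnegative function for which there exists x₀ ∈ ℝ with f(x₀) = 0, f strictly decreasing on (−∞, x₀], f strictly increasing on [x₀, ∞), and f(x) → ∞ as |x| → ∞. Let f_n : ℝ → ℝ be continuous quasiconvex functions (i.e., f_n(v) ≤ max(f_n(u), f_n(w)) whenever u ≤ v ≤ w) with f_n → f uniformly on every compact subset of ℝ. Then, with K(g) := inf{h ∈ ℝ : g(h) ≤ c₀}, the infima K(f_n) are finite for all sufficiently large n and K(f_n) → K(f) as n → ∞. Likewise, sup{h ∈ ℝ : f_n(h) ≤ c₀} → sup{h ∈ ℝ : f(h) ≤ c₀}. -/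
open Filter Set

/-- Continuity of the level-crossing functional `K(g) = inf {h : g h ≤ c₀}` (and
of the corresponding sup) along a sequence of continuous quasiconvex functions
`fn` converging uniformly on compacts to a continuous nonnegative U-shaped
function `f` with minimum value `0` and `f → ∞` at `±∞`. In particular the
sublevel sets of `fn` at level `c₀` are eventually nonempty and bounded. -/
theorem stmt_10 (c₀ : ℝ) (hc₀ : 0 < c₀)
    (f : ℝ → ℝ) (hfc : Continuous f) (hfnn : ∀ x, 0 ≤ f x)
    (x₀ : ℝ) (hx₀ : f x₀ = 0)
    (hdec : StrictAntiOn f (Set.Iic x₀)) (hinc : StrictMonoOn f (Set.Ici x₀))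
    (htop : Tendsto f atTop atTop) (hbot : Tendsto f atBot atTop)
    (fn : ℕ → ℝ → ℝ) (hfnc : ∀ n, Continuous (fn n))
    (hquasi : ∀ n, ∀ u v w : ℝ, u ≤ v → v ≤ w → fn n v ≤ max (fn n u) (fn n w))
    (hunif : ∀ K : Set ℝ, IsCompact K → TendstoUniformlyOn fn f atTop K) :
    (∀ᶠ n in atTop, {h : ℝ | fn n h ≤ c₀}.Nonempty ∧
        BddBelow {h : ℝ | fn n h ≤ c₀} ∧ BddAbove {h : ℝ | fn n h ≤ c₀}) ∧
    Tendsto (fun n => sInf {h : ℝ | fn n h ≤ c₀}) atTop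
      (nhds (sInf {h : ℝ | f h ≤ c₀})) ∧
    Tendsto (fun n => sSup {h : ℝ | fn n h ≤ c₀}) atTop
      (nhds (sSup {h : ℝ | f h ≤ c₀})) := by
  classical
  set S : Set ℝ := {h : ℝ | f h ≤ c₀} with hSdef
  have hScl : IsClosed S := isClosed_le hfc continuous_const
  have hx₀S : x₀ ∈ S := by simp [hSdef, hx₀, hc₀.le]
  have hSne : S.Nonempty := ⟨x₀, hx₀S⟩
  obtain ⟨M, hM⟩ := eventually_atTop.mp (htop.eventually_gt_atTop c₀)
  obtain ⟨m, hm⟩ := eventually_atBot.mp (hbot.eventually (eventually_gt_atTop c₀))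
  have hSbdda : BddAbove S := by
    refine ⟨M, fun x hx => ?_⟩
    by_contra h
    push_neg at h
    exact absurd hx (by simpa [hSdef] using (hM x h.le).not_ge)
  have hSbddb : BddBelow S := by
    refine ⟨m, fun x hx => ?_⟩
    by_contra h
    push_neg at h
    exact absurd hx (by simpa [hSdef] using (hm x h.le).not_ge)
  set a : ℝ := sInf S with hadef
  set b : ℝ := sSup S with hbdef
  have haS : a ∈ S := hScl.csInf_mem hSne hSbddb
  have hbS : b ∈ S := hScl.csSup_mem hSne hSbdda
  have hax : a ≤ x₀ := csInf_le hSbddb hx₀S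
  have hxb : x₀ ≤ b := le_csSup hSbdda hx₀S
  -- strict inequalities a < x₀ < b
  have hnear : ∀ᶠ x in nhds x₀, f x < c₀ :=
    (hfc.tendsto x₀).eventually (gt_mem_nhds (by rw [hx₀]; exact hc₀))
  obtain ⟨η, hη, hball⟩ := Metric.eventually_nhds_iff.mp hnear
  have hax₀ : a < x₀ := by
    have hmem : x₀ - η / 2 ∈ S := by
      have : dist (x₀ - η / 2) x₀ < η := by
        rw [Real.dist_eq]; rw [abs_of_nonpos (by linarith)]; linarith
      exact (hball this).le
    have := csInf_le hSbddb hmem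
    linarith
  have hx₀b : x₀ < b := by
    have hmem : x₀ + η / 2 ∈ S := by
      have : dist (x₀ + η / 2) x₀ < η := by
        rw [Real.dist_eq]; rw [abs_of_nonneg (by linarith)]; linarith
      exact (hball this).le
    have := le_csSup hSbdda hmem
    linarith
  have hfaS : f a ≤ c₀ := haS
  have hfbS : f b ≤ c₀ := hbS
  -- key quantitative lemma
  have key : ∀ δ : ℝ, 0 < δ → ∀ᶠ n in atTop,
      ({h : ℝ | fn n h ≤ c₀}.Nonempty ∧
        BddBelow {h : ℝ | fn n h ≤ c₀} ∧ BddAbove {h : ℝ | fn n h ≤ c₀}) ∧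
      |sInf {h : ℝ | fn n h ≤ c₀} - a| ≤ δ ∧
      |sSup {h : ℝ | fn n h ≤ c₀} - b| ≤ δ := by
    intro δ hδ
    set a' : ℝ := min (a + δ) ((a + x₀) / 2) with ha'def
    set b' : ℝ := max (b - δ) ((x₀ + b) / 2) with hb'def
    have haa' : a < a' := lt_min (by linarith) (by linarith)
    have ha'x : a' ≤ x₀ := le_trans (min_le_right _ _) (by linarith)
    have ha'δ : a' ≤ a + δ := min_le_left _ _
    have hb'b : b' < b := max_lt (by linarith) (by linarith)
    have hxb' : x₀ ≤ b' := le_trans (by linarith) (le_max_right _ _)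
    have hb'δ : b - δ ≤ b' := le_max_left _ _
    have hfa' : f a' < c₀ :=
      lt_of_lt_of_le (hdec (mem_Iic.mpr hax) (mem_Iic.mpr ha'x) haa') hfaS
    have hfb' : f b' < c₀ :=
      lt_of_lt_of_le (hinc (mem_Ici.mpr hxb') (mem_Ici.mpr hxb) hb'b) hfbS
    have hfaδ : c₀ < f (a - δ) := by
      by_contra h
      push_neg at h
      have : a ≤ a - δ := csInf_le hSbddb h
      linarith
    have hfbδ : c₀ < f (b + δ) := by
      by_contra h
      push_neg at h
      have : b + δ ≤ b := le_csSup hSbdda h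
      linarith
    set ε : ℝ := min (min (f (a - δ) - c₀) (c₀ - f a')) (min (f (b + δ) - c₀) (c₀ - f b'))
      with hεdef
    have hε : 0 < ε := by
      apply lt_min (lt_min (by linarith) (by linarith)) (lt_min (by linarith) (by linarith))
    have hε1 : ε ≤ f (a - δ) - c₀ := le_trans (min_le_left _ _) (min_le_left _ _)
    have hε2 : ε ≤ c₀ - f a' := le_trans (min_le_left _ _) (min_le_right _ _)
    have hε3 : ε ≤ f (b + δ) - c₀ := le_trans (min_le_right _ _) (min_le_left _ _)
    have hε4 : ε ≤ c₀ - f b' := le_trans (min_le_right _ _) (min_le_right _ _)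
    have hK := (Metric.tendstoUniformlyOn_iff.mp
      (hunif (Icc (a - δ) (b + δ)) isCompact_Icc)) ε hε
    filter_upwards [hK] with n hn
    have ha'mem : a' ∈ Icc (a - δ) (b + δ) := ⟨by linarith, by linarith⟩
    have hb'mem : b' ∈ Icc (a - δ) (b + δ) := ⟨by linarith, by linarith⟩
    have haδmem : a - δ ∈ Icc (a - δ) (b + δ) := ⟨le_refl _, by linarith⟩
    have hbδmem : b + δ ∈ Icc (a - δ) (b + δ) := ⟨by linarith, le_refl _⟩
    have key1 : fn n a' < c₀ := by
      have h := hn a' ha'mem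
      rw [Real.dist_eq, abs_sub_lt_iff] at h
      linarith [h.1, h.2]
    have key2 : fn n b' < c₀ := by
      have h := hn b' hb'mem
      rw [Real.dist_eq, abs_sub_lt_iff] at h
      linarith [h.1, h.2]
    have key3 : c₀ < fn n (a - δ) := by
      have h := hn (a - δ) haδmem
      rw [Real.dist_eq, abs_sub_lt_iff] at h
      linarith [h.1, h.2]
    have key4 : c₀ < fn n (b + δ) := by
      have h := hn (b + δ) hbδmem
      rw [Real.dist_eq, abs_sub_lt_iff] at h
      linarith [h.1, h.2]
    have hsub : {h : ℝ | fn n h ≤ c₀} ⊆ Icc (a - δ) (b + δ) := by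
      intro x hx
      simp only [mem_setOf_eq] at hx
      constructor
      · by_contra h
        push_neg at h
        have hq := hquasi n x (a - δ) a' h.le (by linarith)
        have : fn n (a - δ) ≤ c₀ := le_trans hq (max_le hx key1.le)
        linarith
      · by_contra h
        push_neg at h
        have hq := hquasi n b' (b + δ) x (by linarith) h.le
        have : fn n (b + δ) ≤ c₀ := le_trans hq (max_le key2.le hx)
        linarith
    have hne : {h : ℝ | fn n h ≤ c₀}.Nonempty := ⟨a', key1.le⟩
    have hbb : BddBelow {h : ℝ | fn n h ≤ c₀} := ⟨a - δ, fun x hx => (hsub hx).1⟩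
    have hba : BddAbove {h : ℝ | fn n h ≤ c₀} := ⟨b + δ, fun x hx => (hsub hx).2⟩
    refine ⟨⟨hne, hbb, hba⟩, ?_, ?_⟩
    · have h1 : a - δ ≤ sInf {h : ℝ | fn n h ≤ c₀} :=
        le_csInf hne (fun x hx => (hsub hx).1)
      have h2 : sInf {h : ℝ | fn n h ≤ c₀} ≤ a' := csInf_le hbb key1.le
      rw [abs_le]
      constructor <;> linarith
    · have h1 : sSup {h : ℝ | fn n h ≤ c₀} ≤ b + δ :=
        csSup_le hne (fun x hx => (hsub hx).2)
      have h2 : b' ≤ sSup {h : ℝ | fn n h ≤ c₀} := le_csSup hba key2.le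
      rw [abs_le]
      constructor <;> linarith
  refine ⟨(key 1 one_pos).mono fun n h => h.1, ?_, ?_⟩
  · rw [Metric.tendsto_nhds]
    intro ε hε
    filter_upwards [key (ε / 2) (by linarith)] with n hn
    rw [Real.dist_eq]
    calc |sInf {h : ℝ | fn n h ≤ c₀} - a| ≤ ε / 2 := hn.2.1
      _ < ε := by linarith
  · rw [Metric.tendsto_nhds]
    intro ε hε
    filter_upwards [key (ε / 2) (by linarith)] with n hn
    rw [Real.dist_eq]
    calc |sSup {h : ℝ | fn n h ≤ c₀} - b| ≤ ε / 2 := hn.2.2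
      _ < ε := by linarith
end
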